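/- Executing a cyclic transaction strictly balances the market: for a cycle of length n+1 with positive reserves and fee parameters r₁, r₂ ∈ (0,1], after executing a cyclic transaction with any input δ > 0 (updating each pool along the cycle by adding the amount swapped in to its input-side reserve and subtracting the amount swapped out from its output-side reserve), the arbitrage index of the cycle computed from the updated reserves is strictly smaller than the arbitrage index computed from the original reserves. -/
import Mathlib


/-- Constant-product AMM swap: output of swapping input `δ` through a pool with
input-side reserve `a`, output-side reserve `b` and fee parameters `r1, r2`. -/
noncomputable def swap (r1 r2 a b δ : ℝ) : ℝ := r1 * r2 * b * δ / (a + r1 * δ)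

/-- Output of feeding an input through a sequence of pools; each pool is a pair
`(input-side reserve, output-side reserve)` along the direction of trade. -/
noncomputable def cyclicOut (r1 r2 : ℝ) : List (ℝ × ℝ) → ℝ → ℝ
  | [], δ => δ
  | p :: ps, δ => cyclicOut r1 r2 ps (swap r1 r2 p.1 p.2 δ)

/-- Arbitrage index of a cycle of pools: product of output-side reserves divided
by product of input-side reserves. -/
noncomputable def arbIndex (ps : List (ℝ × ℝ)) : ℝ :=
  (ps.map Prod.snd).prod / (ps.map Prod.fst).prod

/-- The reversed cycle: the same pools in opposite order with the roles of the
two reserves of each pool interchanged. -/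
def revPools (ps : List (ℝ × ℝ)) : List (ℝ × ℝ) := (ps.map Prod.swap).reverse

/-- The updated pools after executing a cyclic transaction with input `δ`:
each pool's input-side reserve increases by the amount swapped in and its
output-side reserve decreases by the amount swapped out. -/
noncomputable def execPools (r1 r2 : ℝ) : List (ℝ × ℝ) → ℝ → List (ℝ × ℝ)
  | [], _ => []
  | p :: ps, δ =>
      (p.1 + δ, p.2 - swap r1 r2 p.1 p.2 δ) :: execPools r1 r2 ps (swap r1 r2 p.1 p.2 δ)

lemma swap_pos {r1 r2 a b δ : ℝ} (hr1 : 0 < r1) (hr2 : 0 < r2)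
    (ha : 0 < a) (hb : 0 < b) (hδ : 0 < δ) : 0 < swap r1 r2 a b δ := by
  unfold swap; positivity

lemma swap_lt {r1 r2 a b δ : ℝ} (hr1 : 0 < r1) (hr2' : r2 ≤ 1)
    (ha : 0 < a) (hb : 0 < b) (hδ : 0 < δ) : swap r1 r2 a b δ < b := by
  unfold swap
  rw [div_lt_iff₀ (by positivity)]
  nlinarith [mul_nonneg (sub_nonneg.2 hr2') (mul_pos (mul_pos hr1 hb) hδ).le, mul_pos ha hb]

lemma arbIndex_cons (p : ℝ × ℝ) (ps : List (ℝ × ℝ)) :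
    arbIndex (p :: ps) = p.2 / p.1 * arbIndex ps := by
  simp [arbIndex, mul_div_mul_comm]

lemma arbIndex_pos : ∀ (ps : List (ℝ × ℝ)), (∀ p ∈ ps, 0 < p.1 ∧ 0 < p.2) →
    0 < arbIndex ps
  | [], _ => by simp [arbIndex]
  | p :: ps, h => by
    rw [arbIndex_cons]
    obtain ⟨hp1, hp2⟩ := h p (by simp)
    have := arbIndex_pos ps (fun q hq => h q (by simp [hq]))
    positivity

lemma execPools_pos {r1 r2 : ℝ} (hr1 : 0 < r1) (hr2 : 0 < r2) (hr2' : r2 ≤ 1) :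
    ∀ (ps : List (ℝ × ℝ)), (∀ p ∈ ps, 0 < p.1 ∧ 0 < p.2) → ∀ δ, 0 < δ →
    ∀ q ∈ execPools r1 r2 ps δ, 0 < q.1 ∧ 0 < q.2
  | [], _, δ, _ => by simp [execPools]
  | p :: ps, h, δ, hδ => by
    have hp := h p (by simp)
    have hs := swap_pos hr1 hr2 hp.1 hp.2 hδ
    have hs' := swap_lt hr1 hr2' hp.1 hp.2 hδ
    intro q hq
    simp only [execPools, List.mem_cons] at hq
    rcases hq with rfl | hq
    · exact ⟨by dsimp only; linarith [hp.1], by dsimp only; linarith⟩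
    · exact execPools_pos hr1 hr2 hr2' ps (fun q hq => h q (by simp [hq])) _ hs q hq

lemma head_lt {r1 r2 a b δ : ℝ} (hr1 : 0 < r1) (hr2 : 0 < r2) (hr2' : r2 ≤ 1)
    (ha : 0 < a) (hb : 0 < b) (hδ : 0 < δ) :
    (b - swap r1 r2 a b δ) / (a + δ) < b / a := by
  have hs := swap_pos hr1 hr2 ha hb hδ
  rw [div_lt_div_iff₀ (by linarith) ha]
  nlinarith

lemma arbIndex_exec_le {r1 r2 : ℝ} (hr1 : 0 < r1) (hr2 : 0 < r2) (hr2' : r2 ≤ 1) :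
    ∀ (ps : List (ℝ × ℝ)), (∀ p ∈ ps, 0 < p.1 ∧ 0 < p.2) → ∀ δ, 0 < δ →
    arbIndex (execPools r1 r2 ps δ) ≤ arbIndex ps
  | [], _, δ, _ => by simp [execPools]
  | p :: ps, h, δ, hδ => by
    have hp := h p (by simp)
    have hs := swap_pos hr1 hr2 hp.1 hp.2 hδ
    have hs' := swap_lt hr1 hr2' hp.1 hp.2 hδ
    have htail : ∀ q ∈ ps, 0 < q.1 ∧ 0 < q.2 := fun q hq => h q (by simp [hq])
    have hle := arbIndex_exec_le hr1 hr2 hr2' ps htail _ hs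
    have hf := head_lt hr1 hr2 hr2' hp.1 hp.2 hδ
    have ht' : 0 < arbIndex (execPools r1 r2 ps (swap r1 r2 p.1 p.2 δ)) :=
      arbIndex_pos _ (execPools_pos hr1 hr2 hr2' ps htail _ hs)
    have hfpos : (0:ℝ) ≤ p.2 / p.1 := by
      obtain ⟨hp1, hp2⟩ := hp; positivity
    simp only [execPools, arbIndex_cons]
    exact mul_le_mul hf.le hle ht'.le hfpos

/-- executing a cyclic transaction with positive input strictly
decreases the arbitrage index of the cycle. -/
theorem cyclic_transaction_balances_market
    (n : ℕ) (ps : List (ℝ × ℝ)) (hlen : ps.length = n + 1)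
    (hpos : ∀ p ∈ ps, 0 < p.1 ∧ 0 < p.2)
    (r1 r2 : ℝ) (hr1 : 0 < r1) (hr1' : r1 ≤ 1) (hr2 : 0 < r2) (hr2' : r2 ≤ 1)
    (δ : ℝ) (hδ : 0 < δ) :
    arbIndex (execPools r1 r2 ps δ) < arbIndex ps := by
  match ps, hlen with
  | p :: ps, _ =>
    have hp := hpos p (by simp)
    have hs := swap_pos hr1 hr2 hp.1 hp.2 hδ
    have hs' := swap_lt hr1 hr2' hp.1 hp.2 hδ
    have htail : ∀ q ∈ ps, 0 < q.1 ∧ 0 < q.2 := fun q hq => hpos q (by simp [hq])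
    have hle := arbIndex_exec_le hr1 hr2 hr2' ps htail _ hs
    have hf := head_lt hr1 hr2 hr2' hp.1 hp.2 hδ
    have ht' : 0 < arbIndex (execPools r1 r2 ps (swap r1 r2 p.1 p.2 δ)) :=
      arbIndex_pos _ (execPools_pos hr1 hr2 hr2' ps htail _ hs)
    have hfpos : (0:ℝ) < p.2 / p.1 := div_pos hp.2 hp.1
    simp only [execPools, arbIndex_cons]
    exact mul_lt_mul hf hle ht' hfpos.le
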